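/- arXiv:2504.02038 — 5 statements merged into one kernel-verified Lean document; each statement's English description precedes it below -/
import Mathlib

section
/- Let σ : Γ → 2^V be a quasi-geometric topological triangulation of a (d−1)-dimensional simplex and let θ be a special l.s.o.p. for K[Γ]. Then the classes of the squarefree monomials {x^G : G an interior face of Γ} span the local face module L_θ(Γ) as a K-vector space. -/
/-!
A spanning set of `L_θ(Γ)` is given by the classes of monomials `x^e` whose support contains an
interior face; such a support is either a non-face (and then `x^e = 0`) or itself an interior face.
If `x^e` is not squarefree, choose `j` with `e_j ≥ 2` and let `G` be its support. Since `θ` is an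
l.s.o.p., the restrictions `θ|_G` span all linear forms on `G`: otherwise a nonzero `v` supported
on `G` and orthogonal to every `θ_i` would make `x_j ↦ v_j t` a surjection `A_θ(Γ) → K[t]`.
So modulo `θ` the variable `x_j` is a combination of variables outside `G`, and
`x^e = x_j x^(e - e_j)` becomes a combination of monomials with strictly larger support.
Induction on `n - |supp e|` ends at squarefree interior monomials.
-/

open Finset MvPolynomial

set_option synthInstance.maxHeartbeats 1000000
set_option maxHeartbeats 4000000

noncomputable section

namespace LocalFace

/-! ## Geometric realization of abstract simplicial complexes -/

/-- The point of `ℝ^n` corresponding to the vertex `j`. -/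
def stdPt (n : ℕ) (j : Fin n) : EuclideanSpace ℝ (Fin n) :=
  EuclideanSpace.single j 1

/-- The geometric simplex spanned by a finite set of vertices. -/
def faceHull {n : ℕ} (F : Finset (Fin n)) : Set (EuclideanSpace ℝ (Fin n)) :=
  convexHull ℝ (stdPt n '' ↑F)

/-- The geometric realization of a collection of faces. -/
def realization {n : ℕ} (S : Set (Finset (Fin n))) : Set (EuclideanSpace ℝ (Fin n)) :=
  ⋃ F ∈ S, faceHull F

/-- The barycenter of a face. -/
def barycenter {n : ℕ} (F : Finset (Fin n)) : EuclideanSpace ℝ (Fin n) :=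
  (F.card : ℝ)⁻¹ • ∑ j ∈ F, stdPt n j

/-- `X` is homeomorphic to a closed ball of dimension `m`. -/
def IsBall {n : ℕ} (X : Set (EuclideanSpace ℝ (Fin n))) (m : ℕ) : Prop :=
  Nonempty (↥X ≃ₜ ↥(Metric.closedBall (0 : EuclideanSpace ℝ (Fin m)) 1))

/-- `x` is a manifold-interior point of the `m`-dimensional ball `X`: it has an
open neighbourhood in `X` homeomorphic to `ℝ^m`. -/
def IsInteriorPt {n : ℕ} (X : Set (EuclideanSpace ℝ (Fin n))) (m : ℕ)
    (x : EuclideanSpace ℝ (Fin n)) : Prop :=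
  ∃ U : Set (↥X), IsOpen U ∧ (∃ hx : x ∈ X, (⟨x, hx⟩ : ↥X) ∈ U) ∧
    Nonempty (↥U ≃ₜ EuclideanSpace ℝ (Fin m))

/-- A topological triangulation `σ : Γ → 2^V` of the `(d-1)`-dimensional simplex on
`V = {1,…,d}`, where `Γ` is a finite abstract simplicial complex with vertex set
`{1,…,n}`.  For every `U ⊆ V` the realization of `Γ_U = σ⁻¹(2^U)` is a ball of
dimension `|U| - 1`, and `σ⁻¹(U)` consists of the interior faces of this ball. -/
structure TopTriangulation (n d : ℕ) where
  faces : Finset (Finset (Fin n))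
  empty_mem : ∅ ∈ faces
  down_closed : ∀ F ∈ faces, ∀ G ⊆ F, G ∈ faces
  vertex_mem : ∀ j : Fin n, {j} ∈ faces
  σ : Finset (Fin n) → Finset (Fin d)
  mono : ∀ ⦃F G : Finset (Fin n)⦄, F ∈ faces → G ∈ faces → F ⊆ G → σ F ⊆ σ G
  sigma_empty_iff : ∀ F ∈ faces, (σ F = ∅ ↔ F = ∅)
  ball : ∀ U : Finset (Fin d), U.Nonempty →
    IsBall (realization {F | F ∈ faces ∧ σ F ⊆ U}) (U.card - 1)
  interior_iff : ∀ U : Finset (Fin d), U.Nonempty → ∀ F ∈ faces, F.Nonempty → σ F ⊆ U →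
    (σ F = U ↔
      IsInteriorPt (realization {F | F ∈ faces ∧ σ F ⊆ U}) (U.card - 1) (barycenter F))

namespace TopTriangulation

variable {n d : ℕ}

/-- A triangulation is vertex-induced if there is no face `G` of `Γ` and proper subset
`F ⊊ σ(G)` such that `σ({j}) ⊆ F` for all vertices `j` of `G`. -/
def VertexInduced (T : TopTriangulation n d) : Prop :=
  ¬ ∃ G ∈ T.faces, ∃ F ⊂ T.σ G, ∀ j ∈ G, T.σ {j} ⊆ F

/-- A triangulation is quasi-geometric if there is no face `G` of `Γ` and proper subset
`F ⊊ σ(G)` with `|F| < |G|` such that `σ({j}) ⊆ F` for all vertices `j` of `G`. -/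
def QuasiGeometric (T : TopTriangulation n d) : Prop :=
  ¬ ∃ G ∈ T.faces, ∃ F ⊂ T.σ G, F.card < G.card ∧ ∀ j ∈ G, T.σ {j} ⊆ F

/-- A face is interior if `σ(F) = V`. -/
def InteriorFace (T : TopTriangulation n d) (F : Finset (Fin n)) : Prop :=
  F ∈ T.faces ∧ T.σ F = Finset.univ

end TopTriangulation

/-! ## h-polynomials and local h-polynomials -/

/-- The `h`-polynomial of the subcomplex `Γ_U = σ⁻¹(2^U)`, a complex of
dimension `|U| - 1`. -/
def hPoly {n d : ℕ} (T : TopTriangulation n d) (U : Finset (Fin d)) : Polynomial ℤ :=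
  ∑ F ∈ T.faces.filter (fun F => T.σ F ⊆ U),
    Polynomial.X ^ F.card * (1 - Polynomial.X) ^ (U.card - F.card)

/-- The local `h`-polynomial `ℓ(Γ; t) = ∑_{U ⊆ V} (-1)^{|V|-|U|} h(Γ_U; t)`. -/
def localHPoly {n d : ℕ} (T : TopTriangulation n d) : Polynomial ℤ :=
  ∑ U : Finset (Fin d), (-1 : Polynomial ℤ) ^ (d - U.card) * hPoly T U

/-! ## Face rings and local face modules -/

variable (K : Type) [Field K] {n d : ℕ}

/-- The squarefree monomial `x^F` attached to a set of vertices. -/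
def faceMonomial (F : Finset (Fin n)) : MvPolynomial (Fin n) K :=
  ∏ j ∈ F, X j

/-- The Stanley–Reisner ideal of `Γ`. -/
def faceIdeal (T : TopTriangulation n d) : Ideal (MvPolynomial (Fin n) K) :=
  Ideal.span {p | ∃ F : Finset (Fin n), F ∉ T.faces ∧ p = faceMonomial K F}

/-- A family `θ` of linear forms is special if `θ i` is supported on the
variables `x_j` with `i ∈ σ({j})`. -/
def IsSpecial (T : TopTriangulation n d) (θ : Fin d → MvPolynomial (Fin n) K) : Prop :=
  ∀ i : Fin d, ∀ e ∈ (θ i).support, ∃ j : Fin n, i ∈ T.σ {j} ∧ e = Finsupp.single j 1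

/-- The ideal of the polynomial ring generated by the Stanley–Reisner relations
together with the linear forms `θ`. -/
def ringRel (T : TopTriangulation n d) (θ : Fin d → MvPolynomial (Fin n) K) :
    Ideal (MvPolynomial (Fin n) K) :=
  faceIdeal K T + Ideal.span (Set.range θ)

/-- The quotient `A_θ(Γ) = K[Γ]/(θ_1, …, θ_d)`. -/
abbrev FaceQuot (T : TopTriangulation n d) (θ : Fin d → MvPolynomial (Fin n) K) : Type :=
  MvPolynomial (Fin n) K ⧸ ringRel K T θ

/-- The quotient map onto `A_θ(Γ)`. -/
def proj (T : TopTriangulation n d) (θ : Fin d → MvPolynomial (Fin n) K) :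
    MvPolynomial (Fin n) K →+* FaceQuot K T θ :=
  Ideal.Quotient.mk (ringRel K T θ)

/-- `θ` is a linear system of parameters: the quotient is a finite-dimensional
vector space. -/
def IsLsop (T : TopTriangulation n d) (θ : Fin d → MvPolynomial (Fin n) K) : Prop :=
  FiniteDimensional K (FaceQuot K T θ)

/-- The total degree of an exponent vector. -/
def degSum {n : ℕ} (e : Fin n →₀ ℕ) : ℕ := e.sum fun _ v => v

/-- The degree `s` part of the local face module `L_θ(Γ)`: the span of the
classes of degree `s` monomials whose underlying face is interior. -/
def Lpart (T : TopTriangulation n d) (θ : Fin d → MvPolynomial (Fin n) K) (s : ℕ) :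
    Submodule K (FaceQuot K T θ) :=
  Submodule.span K {u | ∃ e : Fin n →₀ ℕ,
    degSum e = s ∧ T.InteriorFace e.support ∧ u = proj K T θ (monomial e 1)}

/-- The local face module `L_θ(Γ)`: the image in `A_θ(Γ)` of the ideal of
interior faces. -/
def LIdeal (T : TopTriangulation n d) (θ : Fin d → MvPolynomial (Fin n) K) :
    Ideal (FaceQuot K T θ) :=
  Ideal.span {u | ∃ G : Finset (Fin n), T.InteriorFace G ∧ u = proj K T θ (faceMonomial K G)}

/-- The class of `ℓ = x_1 + ⋯ + x_n`. -/
def ellC (T : TopTriangulation n d) (θ : Fin d → MvPolynomial (Fin n) K) : FaceQuot K T θ :=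
  proj K T θ (∑ j : Fin n, X j)

/-! ### the generic special l.s.o.p. -/

/-- The index type of the variables `a_{i,j}`, `i ∈ σ({j})`. -/
def GenIdx (T : TopTriangulation n d) : Type := {p : Fin d × Fin n // p.1 ∈ T.σ {p.2}}

/-- The field `K = k(a_{i,j} : 1 ≤ j ≤ n, i ∈ σ({j}))`. -/
abbrev GenField (k : Type) [Field k] (T : TopTriangulation n d) : Type :=
  FractionRing (MvPolynomial (GenIdx T) k)

/-- The element `a_{i,j}` of `K`. -/
def genVar (k : Type) [Field k] (T : TopTriangulation n d) (w : GenIdx T) : GenField k T :=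
  algebraMap (MvPolynomial (GenIdx T) k) (GenField k T) (X w)

/-- The generic special l.s.o.p. `θ_i = ∑_{j : i ∈ σ(j)} a_{i,j} x_j`. -/
def thetaGen (k : Type) [Field k] (T : TopTriangulation n d) (i : Fin d) :
    MvPolynomial (Fin n) (GenField k T) :=
  ∑ j : Fin n, if h : i ∈ T.σ {j} then C (genVar k T ⟨(i, j), h⟩) * X j else 0

/-! ## The cone sphere `Γ̂` and its artinian Gorenstein quotient -/

/-- The faces of the sphere `Γ̂`, obtained from `Γ` by adding a cone vertex `c`
(the last element of `Fin (n+1)`) over the boundary of `Γ`. -/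
def hatFaces (T : TopTriangulation n d) : Set (Finset (Fin (n + 1))) :=
  {F | ∃ G ∈ T.faces, F = G.image Fin.castSucc ∨
        (T.σ G ≠ Finset.univ ∧ F = insert (Fin.last n) (G.image Fin.castSucc))}

/-- The Stanley–Reisner ideal of `Γ̂`. -/
def hatFaceIdeal (T : TopTriangulation n d) : Ideal (MvPolynomial (Fin (n + 1)) K) :=
  Ideal.span {p | ∃ F : Finset (Fin (n + 1)), F ∉ hatFaces T ∧ p = ∏ v ∈ F, X v}

/-- The l.s.o.p. `θ̂_i = θ_i - x_c` for `K[Γ̂]`. -/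
def thetaHat (θ : Fin d → MvPolynomial (Fin n) K) (i : Fin d) :
    MvPolynomial (Fin (n + 1)) K :=
  rename Fin.castSucc (θ i) - X (Fin.last n)

def hatRel (T : TopTriangulation n d) (θ : Fin d → MvPolynomial (Fin n) K) :
    Ideal (MvPolynomial (Fin (n + 1)) K) :=
  hatFaceIdeal K T + Ideal.span (Set.range (thetaHat K θ))

/-- The artinian Gorenstein algebra `A_θ̂(Γ̂) = K[Γ̂]/(θ̂_1, …, θ̂_d)`. -/
abbrev HatQuot (T : TopTriangulation n d) (θ : Fin d → MvPolynomial (Fin n) K) : Type :=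
  MvPolynomial (Fin (n + 1)) K ⧸ hatRel K T θ

def projHat (T : TopTriangulation n d) (θ : Fin d → MvPolynomial (Fin n) K) :
    MvPolynomial (Fin (n + 1)) K →+* HatQuot K T θ :=
  Ideal.Quotient.mk (hatRel K T θ)

/-- The class of the cone variable `x_c`. -/
def xc (T : TopTriangulation n d) (θ : Fin d → MvPolynomial (Fin n) K) : HatQuot K T θ :=
  projHat K T θ (X (Fin.last n))

/-- The ideal `(x_c)` of `A_θ̂(Γ̂)`, as a `K`-submodule. -/
def IcSub (T : TopTriangulation n d) (θ : Fin d → MvPolynomial (Fin n) K) :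
    Submodule K (HatQuot K T θ) :=
  Submodule.restrictScalars K (Ideal.span {xc K T θ})

/-- The annihilator of `x_c` in `A_θ̂(Γ̂)`, as a `K`-submodule. -/
def annXc (T : TopTriangulation n d) (θ : Fin d → MvPolynomial (Fin n) K) :
    Submodule K (HatQuot K T θ) :=
  LinearMap.ker (LinearMap.mulLeft K (xc K T θ))

/-- The span in `A_θ̂(Γ̂)` of the classes of the degree `s` monomials (in the
variables of `Γ`) with interior underlying face; this maps isomorphically onto the
degree `s` part of the local face module under `A_θ̂(Γ̂)/(x_c) ≅ A_θ(Γ)`. -/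
def LhatPart (T : TopTriangulation n d) (θ : Fin d → MvPolynomial (Fin n) K) (s : ℕ) :
    Submodule K (HatQuot K T θ) :=
  Submodule.span K {u | ∃ e : Fin n →₀ ℕ, degSum e = s ∧ T.InteriorFace e.support ∧
    u = projHat K T θ (monomial (e.mapDomain Fin.castSucc) 1)}

/-- The class of `ℓ = x_1 + ⋯ + x_n` in `A_θ̂(Γ̂)`. -/
def ellHat (T : TopTriangulation n d) (θ : Fin d → MvPolynomial (Fin n) K) : HatQuot K T θ :=
  projHat K T θ (∑ j : Fin n, X (Fin.castSucc j))


/-! ## Geometric and regular triangulations -/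

/-- The data of a geometric realization of a triangulation `σ : Γ → 2^V` of the
standard `(d-1)`-simplex: vertices of `Γ` are realized as points of the standard
simplex, cells are simplices meeting along common faces and covering the simplex,
and `σ` sends a face to the smallest face of the simplex containing it. -/
structure GeomData {n d : ℕ} (T : TopTriangulation n d) where
  p : Fin n → EuclideanSpace ℝ (Fin d)
  mem_simplex : ∀ j : Fin n, (∀ i, 0 ≤ p j i) ∧ (∑ i, p j i) = 1
  indep : ∀ F ∈ T.faces, AffineIndependent ℝ (fun j : ↥F => p ↑j)
  sigma_eq : ∀ F ∈ T.faces,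
    T.σ F = Finset.univ.filter (fun i : Fin d => ∃ j ∈ F, p j i ≠ 0)
  cover : (⋃ F ∈ T.faces, convexHull ℝ (p '' ↑F)) =
    {x : EuclideanSpace ℝ (Fin d) | (∀ i, 0 ≤ x i) ∧ (∑ i, x i) = 1}
  inter : ∀ F ∈ T.faces, ∀ G ∈ T.faces,
    convexHull ℝ (p '' ↑F) ∩ convexHull ℝ (p '' ↑G) = convexHull ℝ (p '' ↑(F ∩ G))

/-- A triangulation is regular if it admits a geometric realization which is the
projection of the lower faces of the convex hull of the vertices lifted by a
height function: every facet is cut out by an affine functional agreeing with the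
heights on the facet and lying strictly below the heights elsewhere. -/
def TopTriangulation.Regular {n d : ℕ} (T : TopTriangulation n d) : Prop :=
  ∃ D : GeomData T, ∃ ht : Fin n → ℝ,
    ∀ F ∈ T.faces, F.card = d →
      ∃ (w : Fin d → ℝ) (c₀ : ℝ),
        (∀ j ∈ F, (∑ i, w i * D.p j i) + c₀ = ht j) ∧
        (∀ j ∉ F, (∑ i, w i * D.p j i) + c₀ < ht j)

/-! ## The ring `k[x_1,…,x_t]/(x_1^3,…,x_t^3)` -/

/-- The ring `R = k[x_1,…,x_t]/(x_1^3, …, x_t^3)`. -/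
abbrev CubeQuot (k : Type) [Field k] (t : ℕ) : Type :=
  MvPolynomial (Fin t) k ⧸
    Ideal.span {p : MvPolynomial (Fin t) k | ∃ s : Fin t, p = X s ^ 3}

/-- The quotient map onto `R`. -/
def cproj (k : Type) [Field k] (t : ℕ) : MvPolynomial (Fin t) k →+* CubeQuot k t :=
  Ideal.Quotient.mk _

/-- The element `y = ∑ a_s x_s` of `R`. -/
def yEl (k : Type) [Field k] (t : ℕ) (a : Fin t → k) : CubeQuot k t :=
  cproj k t (∑ s : Fin t, C (a s) * X s)

/-- The element `z_m = ∑ a_1^{l_1 - 1} ⋯ a_t^{l_t - 1} x_1^{l_1} ⋯ x_t^{l_t}` of `R`,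
the sum over all `(l_1, …, l_t)` with `l_s ∈ {1, 2}` and `∑ l_s = m`.
(For `m > 2t` this is the empty sum, i.e. `0`.) -/
def zEl (k : Type) [Field k] (t : ℕ) (a : Fin t → k) (m : ℕ) : CubeQuot k t :=
  ∑ l ∈ Finset.univ.filter (fun l : Fin t → Fin 2 => t + ∑ s, (l s : ℕ) = m),
    cproj k t (∏ s : Fin t, (C (a s) ^ (l s : ℕ) * X s ^ ((l s : ℕ) + 1)))

theorem _root_.MvPolynomial.eq_sum_C_coeff_mul_X {σ R : Type*} [Fintype σ] [CommSemiring R]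
    (p : MvPolynomial σ R) (hp : ∀ e ∈ p.support, ∃ j, e = Finsupp.single j 1) :
    p = ∑ j, C (coeff (Finsupp.single j 1) p) * X j := by
  classical
  ext m
  simp only [coeff_sum, coeff_C_mul, coeff_X]
  by_cases hm : ∃ j, m = Finsupp.single j 1
  · obtain ⟨j, rfl⟩ := hm
    simp [Finsupp.single_left_inj one_ne_zero]
  · push Not at hm
    rw [Finset.sum_eq_zero fun j _ => by rw [if_neg (hm j).symm, mul_zero]]
    exact notMem_support_iff.mp fun h => hm _ (hp m h).choose_spec

theorem _root_.Finsupp.exists_add_single_eq_of_two_le {ι : Type*} {e : ι →₀ ℕ} {j : ι}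
    (h : 2 ≤ e j) : ∃ e' : ι →₀ ℕ, e' + Finsupp.single j 1 = e ∧ e'.support = e.support := by
  classical
  refine ⟨e - Finsupp.single j 1, tsub_add_cancel_of_le (Finsupp.single_le_iff.mpr (by omega)), ?_⟩
  ext k
  by_cases hk : j = k
  · subst hk
    simp only [Finsupp.mem_support_iff, Finsupp.coe_tsub, Pi.sub_apply, Finsupp.single_eq_same]
    omega
  · simp [hk]

theorem _root_.Finsupp.support_add_single_one {ι : Type*} [DecidableEq ι] (e : ι →₀ ℕ) (j : ι) :
    (e + Finsupp.single j 1).support = insert j e.support := by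
  rw [Finsupp.support_add_eq_union, Finsupp.support_single j one_ne_zero, Finset.union_comm,
    Finset.insert_eq]

theorem _root_.Finsupp.subset_support_add_sum_single {ι : Type*} (e : ι →₀ ℕ) (G : Finset ι) :
    G ⊆ (e + ∑ j ∈ G, Finsupp.single j 1).support := by
  classical
  intro j hj
  simp [Finsupp.single_apply, hj]

theorem IsSpecial.eq_sum_C_coeff_mul_X {K : Type} [Field K] {T : TopTriangulation n d}
    {θ : Fin d → MvPolynomial (Fin n) K} (hspec : IsSpecial K T θ) (i : Fin d) :
    θ i = ∑ j, C (coeff (Finsupp.single j 1) (θ i)) * X j :=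
  MvPolynomial.eq_sum_C_coeff_mul_X _ fun e he => (hspec i e he).imp fun _ h => h.2

section

variable {K} (T : TopTriangulation n d) (θ : Fin d → MvPolynomial (Fin n) K)

theorem faceMonomial_eq_monomial (G : Finset (Fin n)) :
    faceMonomial K G = monomial (∑ j ∈ G, Finsupp.single j 1) 1 := by
  rw [monomial_sum_one]; rfl

theorem monomial_eq_faceMonomial_support {e : Fin n →₀ ℕ} (he : ∀ j, e j ≤ 1) :
    monomial e (1 : K) = faceMonomial K e.support := by
  rw [← prod_X_pow_eq_monomial, faceMonomial]
  refine Finset.prod_congr rfl fun j hj => ?_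
  rw [le_antisymm (he j) (Nat.one_le_iff_ne_zero.mpr (Finsupp.mem_support_iff.mp hj)), pow_one]

theorem faceMonomial_support_dvd_monomial (e : Fin n →₀ ℕ) :
    faceMonomial K e.support ∣ monomial e 1 := by
  rw [← prod_X_pow_eq_monomial, faceMonomial]
  exact Finset.prod_dvd_prod_of_dvd _ _ fun j hj =>
    dvd_pow_self _ (Finsupp.mem_support_iff.mp hj)

theorem proj_monomial_eq_zero {e : Fin n →₀ ℕ} (he : e.support ∉ T.faces) :
    proj K T θ (monomial e 1) = 0 :=
  Ideal.Quotient.eq_zero_iff_mem.mpr <| Submodule.mem_sup_left <|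
    Ideal.mem_of_dvd _ (faceMonomial_support_dvd_monomial e) (Ideal.subset_span ⟨_, he, rfl⟩)

theorem proj_θ_eq_zero (i : Fin d) : proj K T θ (θ i) = 0 :=
  Ideal.Quotient.eq_zero_iff_mem.mpr <| Submodule.mem_sup_right <| Ideal.subset_span ⟨i, rfl⟩

theorem proj_C_mul (c : K) (p : MvPolynomial (Fin n) K) :
    proj K T θ (C c * p) = c • proj K T θ p := by
  rw [← smul_eq_C_mul]
  exact map_smul (Ideal.Quotient.mkₐ K (ringRel K T θ)) c p

theorem span_proj_monomial_eq_top :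
    Submodule.span K (Set.range fun e => proj K T θ (monomial e 1)) = ⊤ := by
  have hspan := (basisMonomials (Fin n) K).span_eq
  rw [coe_basisMonomials] at hspan
  rw [show (Set.range fun e => proj K T θ (monomial e 1)) =
      (Ideal.Quotient.mkₐ K (ringRel K T θ)).toLinearMap '' Set.range fun e => monomial e 1 by
    rw [← Set.range_comp]; rfl, Submodule.span_image, hspan, Submodule.map_top,
    LinearMap.range_eq_top]
  exact Ideal.Quotient.mk_surjective

theorem ringRel_le_ker_aeval (hspec : IsSpecial K T θ) {G : Finset (Fin n)} (hG : G ∈ T.faces)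
    {v : Fin n → K} (hvG : ∀ j ∉ G, v j = 0)
    (hθv : ∀ i, ∑ j, coeff (Finsupp.single j 1) (θ i) * v j = 0) :
    ringRel K T θ ≤ RingHom.ker
      (aeval fun j => Polynomial.C (v j) * Polynomial.X :
        MvPolynomial (Fin n) K →ₐ[K] Polynomial K) := by
  refine sup_le (Ideal.span_le.mpr ?_) (Ideal.span_le.mpr ?_)
  · rintro _ ⟨F, hF, rfl⟩
    obtain ⟨j, hjF, hjG⟩ : ∃ j ∈ F, j ∉ G :=
      Finset.not_subset.mp fun hFG => hF (T.down_closed G hG F hFG)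
    simp [faceMonomial, Finset.prod_eq_zero hjF, hvG j hjG]
  · rintro _ ⟨i, rfl⟩
    rw [SetLike.mem_coe, RingHom.mem_ker, hspec.eq_sum_C_coeff_mul_X i]
    simp only [map_sum, map_mul, aeval_C, aeval_X, Polynomial.algebraMap_eq]
    simp_rw [← mul_assoc, ← Polynomial.C_mul, ← Finset.sum_mul, ← map_sum, hθv i, map_zero,
      zero_mul]

theorem eq_zero_of_forall_sum_coeff_mul_eq_zero (hspec : IsSpecial K T θ) (hlsop : IsLsop K T θ)
    {G : Finset (Fin n)} (hG : G ∈ T.faces) {v : Fin n → K} (hvG : ∀ j ∉ G, v j = 0)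
    (hθv : ∀ i, ∑ j, coeff (Finsupp.single j 1) (θ i) * v j = 0) :
    v = 0 := by
  by_contra hv
  obtain ⟨j₀, hj₀⟩ : ∃ j, v j ≠ 0 := by simpa [funext_iff] using hv
  let φ : MvPolynomial (Fin n) K →ₐ[K] Polynomial K :=
    aeval fun j => Polynomial.C (v j) * Polynomial.X
  let ψ := Ideal.Quotient.liftₐ _ φ fun _ ha => ringRel_le_ker_aeval T θ hspec hG hvG hθv ha
  have hφ : Function.Surjective φ := by
    rw [← AlgHom.range_eq_top, eq_top_iff, ← Polynomial.adjoin_X, Algebra.adjoin_le_iff,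
      Set.singleton_subset_iff]
    exact ⟨C (v j₀)⁻¹ * X j₀, by simp [φ, ← mul_assoc, ← Polynomial.C_mul, hj₀]⟩
  have hψ : Function.Surjective ψ := .of_comp (g := Ideal.Quotient.mk _) hφ
  have : Module.Finite K (FaceQuot K T θ) := hlsop
  exact Polynomial.not_finite (Module.Finite.of_surjective ψ.toLinearMap hψ)

theorem span_coeff_sup_ker_restrict_eq_top (hspec : IsSpecial K T θ) (hlsop : IsLsop K T θ)
    {G : Finset (Fin n)} (hG : G ∈ T.faces) :
    Submodule.span K (Set.range fun i j => coeff (Finsupp.single j 1) (θ i)) ⊔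
      LinearMap.ker (LinearMap.funLeft K K ((↑) : G → Fin n)) = ⊤ := by
  by_contra hne
  obtain ⟨g, hg, hle⟩ := Submodule.exists_le_ker_of_lt_top _ (lt_top_iff_ne_top.mpr hne)
  set v : Fin n → K := fun j => g fun k => if j = k then 1 else 0
  have hgv : ∀ w, g w = ∑ j, w j * v j := fun w => g.pi_apply_eq_sum_univ w
  have hvG : ∀ j ∉ G, v j = 0 := fun j hj => hle <| Submodule.mem_sup_right <| by
    ext ⟨k, hk⟩
    simp [(ne_of_mem_of_not_mem hk hj).symm]
  have hθv : ∀ i, ∑ j, coeff (Finsupp.single j 1) (θ i) * v j = 0 := fun i =>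
    (hgv _).symm.trans (hle (Submodule.mem_sup_left (Submodule.subset_span ⟨i, rfl⟩)))
  have hv := eq_zero_of_forall_sum_coeff_mul_eq_zero T θ hspec hlsop hG hvG hθv
  exact hg (LinearMap.ext fun w => by simp [hgv, hv])

theorem proj_X_mem_span_proj_X_compl (hspec : IsSpecial K T θ) (hlsop : IsLsop K T θ)
    {G : Finset (Fin n)} (hG : G ∈ T.faces) (j : Fin n) :
    proj K T θ (X j) ∈ Submodule.span K ((fun j' => proj K T θ (X j')) '' (↑G)ᶜ) := by
  classical
  let Λ := Fintype.linearCombination K fun j' => proj K T θ (X j')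
  have hΛθ : Submodule.span K (Set.range fun i j' => coeff (Finsupp.single j' 1) (θ i)) ≤
      LinearMap.ker Λ := by
    refine Submodule.span_le.mpr (Set.range_subset_iff.mpr fun i => ?_)
    rw [SetLike.mem_coe, LinearMap.mem_ker, Fintype.linearCombination_apply,
      ← proj_θ_eq_zero T θ i]
    conv_rhs => rw [hspec.eq_sum_C_coeff_mul_X i]
    simp [proj_C_mul]
  obtain ⟨w, hw, u, hu, hwu⟩ := Submodule.mem_sup.mp
    (span_coeff_sup_ker_restrict_eq_top T θ hspec hlsop hG ▸ Submodule.mem_top :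
      Pi.single j (1 : K) ∈ _)
  have hΛu : proj K T θ (X j) = Λ u := by
    rw [← zero_add (Λ u), ← hΛθ hw, ← map_add, hwu]
    simp [Λ]
  rw [hΛu, Fintype.linearCombination_apply]
  refine Submodule.sum_mem _ fun j' _ => ?_
  by_cases hj' : j' ∈ G
  · rw [show u j' = 0 from congrFun (LinearMap.mem_ker.mp hu) ⟨j', hj'⟩, zero_smul]
    exact Submodule.zero_mem _
  · exact Submodule.smul_mem _ _ (Submodule.subset_span ⟨j', hj', rfl⟩)

def squarefreeInteriorSpan : Submodule K (FaceQuot K T θ) :=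
  Submodule.span K {u | ∃ G : Finset (Fin n), T.InteriorFace G ∧
    u = proj K T θ (faceMonomial K G)}

theorem proj_monomial_mem_squarefreeInteriorSpan (hspec : IsSpecial K T θ)
    (hlsop : IsLsop K T θ) {G : Finset (Fin n)} (hG : T.InteriorFace G)
    (e : Fin n →₀ ℕ) (hGe : G ⊆ e.support) :
    proj K T θ (monomial e 1) ∈ squarefreeInteriorSpan T θ := by
  classical
  by_cases hface : e.support ∉ T.faces
  · rw [proj_monomial_eq_zero T θ hface]
    exact Submodule.zero_mem _
  push Not at hface
  by_cases hsq : ∀ j, e j ≤ 1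
  · rw [monomial_eq_faceMonomial_support hsq]
    exact Submodule.subset_span
      ⟨_, ⟨hface, Finset.univ_subset_iff.mp (hG.2 ▸ T.mono hG.1 hface hGe)⟩, rfl⟩
  push Not at hsq
  obtain ⟨j, hj⟩ := hsq
  obtain ⟨e', he'e, he'⟩ := Finsupp.exists_add_single_eq_of_two_le hj
  rw [← he'e]
  have hX := Submodule.mem_map_of_mem (f := LinearMap.mulRight K (proj K T θ (monomial e' 1)))
    (proj_X_mem_span_proj_X_compl T θ hspec hlsop hface j)
  rw [Submodule.map_span, LinearMap.mulRight_apply, ← map_mul, mul_comm, X, monomial_mul,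
    one_mul] at hX
  refine Submodule.span_le.mpr ?_ hX
  rintro _ ⟨_, ⟨j', hj', rfl⟩, rfl⟩
  rw [SetLike.mem_coe, LinearMap.mulRight_apply, ← map_mul, mul_comm, X, monomial_mul, one_mul]
  have hsupp : (e' + Finsupp.single j' 1).support = insert j' e.support := by
    rw [Finsupp.support_add_single_one, he']
  have hlt : n - (e' + Finsupp.single j' 1).support.card < n - e.support.card := by
    have hcard := Finset.card_le_univ (insert j' e.support)
    rw [Finset.card_insert_of_notMem hj', Fintype.card_fin] at hcard
    rw [hsupp, Finset.card_insert_of_notMem hj']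
    omega
  exact proj_monomial_mem_squarefreeInteriorSpan hspec hlsop hG (e' + Finsupp.single j' 1)
    (hsupp ▸ hGe.trans (Finset.subset_insert _ _))
termination_by n - e.support.card
decreasing_by assumption

end

theorem localFaceModule_spanned_by_squarefree_general (K : Type) [Field K] {n d : ℕ}
    (T : TopTriangulation n d)
    (θ : Fin d → MvPolynomial (Fin n) K) (hspec : IsSpecial K T θ)
    (hlsop : IsLsop K T θ) :
    Submodule.restrictScalars K (LIdeal K T θ) =
      Submodule.span K {u | ∃ G : Finset (Fin n), T.InteriorFace G ∧
        u = proj K T θ (faceMonomial K G)} := by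
  refine le_antisymm ?_ (Submodule.span_le_restrictScalars K _ _)
  rw [LIdeal, Ideal.span, ← Submodule.span_smul_of_span_eq_top (span_proj_monomial_eq_top T θ),
    Submodule.span_le]
  rintro _ ⟨_, ⟨e, rfl⟩, _, ⟨G, hG, rfl⟩, rfl⟩
  dsimp only
  rw [SetLike.mem_coe, smul_eq_mul, ← map_mul, faceMonomial_eq_monomial, monomial_mul, one_mul]
  exact proj_monomial_mem_squarefreeInteriorSpan T θ hspec hlsop hG _
    (Finsupp.subset_support_add_sum_single e G)

/-- Let `σ : Γ → 2^V` be a quasi-geometric triangulation of a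
`(d-1)`-dimensional simplex and `θ` a special l.s.o.p. for `K[Γ]`.  The classes of
the squarefree monomials `x^G`, for `G` an interior face, span the local face
module `L_θ(Γ)` (the image of the ideal of interior faces) as a `K`-vector
space. -/
theorem localFaceModule_spanned_by_squarefree (K : Type) [Field K] {n d : ℕ}
    (T : TopTriangulation n d) (hqg : T.QuasiGeometric)
    (θ : Fin d → MvPolynomial (Fin n) K) (hspec : IsSpecial K T θ)
    (hlsop : IsLsop K T θ) :
    Submodule.restrictScalars K (LIdeal K T θ) =
      Submodule.span K {u | ∃ G : Finset (Fin n), T.InteriorFace G ∧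
        u = proj K T θ (faceMonomial K G)} :=
  localFaceModule_spanned_by_squarefree_general K T θ hspec hlsop

end LocalFace
end
end

section
/- Let k be a field, t ≥ 1, and R = k[x_1,…,x_t]/(x_1^3,…,x_t^3). Fix a_1,…,a_t ∈ k and set y = Σ_{s=1}^t a_s x_s. For t ≤ m ≤ 2t define z_m = Σ (Π_{s=1}^t a_s^{l_s−1}) x_1^{l_1}⋯x_t^{l_t}, the sum over all (l_1,…,l_t) with l_s ∈ {1,2} and Σ_s l_s = m, and set z_{2t+1} = 0. Then y·z_m = (m+1−t)·z_{m+1} in R for all t ≤ m ≤ 2t; consequently y^r·(x_1⋯x_t) = r!·z_{t+r} for all 0 ≤ r ≤ t. -/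
/-! Encode the index `(l_1, …, l_t)` by `l : Fin t → Fin 2` with `l_s - 1` in place of `l_s`,
so that `z_{t+n}` is the sum of `P l = ∏ₛ a_s^{l_s} x_s^{l_s+1}` over the `l` of weight `n`.
Multiplying `P l` by `a_s x_s` raises `l_s` from `0` to `1`, and gives `0` when `l_s = 1`
because `x_s^3 = 0`. So `y · z_{t+n}` is a sum over the pairs `(l, s)` with `l_s = 0`;
reindexed by `l' = l[s ↦ 1]`, it counts each `l'` of weight `n + 1` once for every `s` with
`l'_s = 1`, that is `n + 1` times. Iterating from `z_t = x_1 ⋯ x_t` gives the factorials. -/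


open Finset MvPolynomial

set_option synthInstance.maxHeartbeats 1000000
set_option maxHeartbeats 4000000

noncomputable section

namespace LocalFace

/-! ## Face rings and local face modules -/

variable (K : Type) [Field K] {n d : ℕ}

section FinTwoValued

variable {ι : Type*} [Fintype ι] [DecidableEq ι]

@[to_additive]
theorem prod_apply_update {β M : Type*} [CommMonoid M] (F : ι → β → M) (l : ι → β) (j : ι)
    (v : β) : ∏ i, F i (Function.update l j v i) = F j v * ∏ i ∈ univ.erase j, F i (l i) := by
  simp only [Function.apply_update F l j v]
  rw [prod_update_of_mem (mem_univ j), sdiff_singleton_eq_erase]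

theorem sum_val_update_add (l : ι → Fin 2) (j : ι) (v : Fin 2) :
    ∑ i, (Function.update l j v i : ℕ) + l j = ∑ i, (l i : ℕ) + v := by
  rw [sum_apply_update (fun _ (w : Fin 2) => (w : ℕ)), ← add_sum_erase univ _ (mem_univ j)]
  ring

theorem sum_mul_prod_fin_two {A : Type*} [CommSemiring A] {c : ι → A} {f : ι → Fin 2 → A}
    (hc₀ : ∀ i, c i * f i 0 = f i 1) (hc₁ : ∀ i, c i * f i 1 = 0) (l : ι → Fin 2) :
    (∑ i, c i) * ∏ i, f i (l i) = ∑ i with l i = 0, ∏ i', f i' (Function.update l i 1 i') := by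
  rw [sum_mul, sum_filter]
  refine sum_congr rfl fun i _ => ?_
  rw [prod_apply_update, ← mul_prod_erase univ _ (mem_univ i), ← mul_assoc]
  obtain h | h : l i = 0 ∨ l i = 1 := by omega
  all_goals simp [h, hc₀, hc₁]

theorem sum_update_one_eq_sum {M : Type*} [AddCommMonoid M] (g : (ι → Fin 2) → M) (n : ℕ)
    (j : ι) :
    ∑ l with ∑ i, (l i : ℕ) = n ∧ l j = 0, g (Function.update l j 1) =
      ∑ l with ∑ i, (l i : ℕ) = n + 1 ∧ l j = 1, g l := by
  refine sum_nbij' (Function.update · j 1) (Function.update · j 0) ?_ ?_ ?_ ?_ fun _ _ => rfl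
  · intro l hl
    obtain ⟨hsum, hj⟩ := (mem_filter.mp hl).2
    have := sum_val_update_add l j 1
    simp only [mem_filter, mem_univ, true_and, hj, Function.update_self, Fin.val_zero,
      Fin.val_one, and_true] at this ⊢
    omega
  · intro l hl
    obtain ⟨hsum, hj⟩ := (mem_filter.mp hl).2
    have := sum_val_update_add l j 0
    simp only [mem_filter, mem_univ, true_and, hj, Function.update_self, Fin.val_zero,
      Fin.val_one, and_true] at this ⊢
    omega
  all_goals
    intro l hl
    rw [Function.update_idem, ← (mem_filter.mp hl).2.2, Function.update_eq_self]

theorem sum_sum_update_one_eq_smul {M : Type*} [AddCommMonoid M] (g : (ι → Fin 2) → M)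
    (n : ℕ) :
    ∑ l with ∑ i, (l i : ℕ) = n, ∑ i with l i = 0, g (Function.update l i 1) =
      (n + 1) • ∑ l with ∑ i, (l i : ℕ) = n + 1, g l := by
  have hweight (l : ι → Fin 2) : ∑ i, (l i : ℕ) = #{i | l i = 1} := by
    rw [card_filter]
    refine sum_congr rfl fun i _ => ?_
    obtain h | h : l i = 0 ∨ l i = 1 := by omega
    all_goals simp [h]
  calc _ = ∑ j, ∑ l with ∑ i, (l i : ℕ) = n ∧ l j = 0, g (Function.update l j 1) :=
        sum_comm' fun l j => by simp
    _ = ∑ j, ∑ l with ∑ i, (l i : ℕ) = n + 1 ∧ l j = 1, g l :=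
        sum_congr rfl fun j _ => sum_update_one_eq_sum g n j
    _ = ∑ l with ∑ i, (l i : ℕ) = n + 1, ∑ i with l i = 1, g l :=
        sum_comm' fun j l => by simp [and_comm]
    _ = _ := by
      rw [smul_sum]
      refine sum_congr rfl fun l hl => ?_
      rw [sum_const, ← hweight, (mem_filter.mp hl).2]

end FinTwoValued

section TruncatedCubes

variable {k : Type} [Field k] {t : ℕ}

theorem cproj_X_pow_three (s : Fin t) : cproj k t (X s ^ 3) = 0 :=
  Ideal.Quotient.eq_zero_iff_mem.mpr (Ideal.subset_span ⟨s, rfl⟩)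

theorem zEl_add (a : Fin t → k) (n : ℕ) :
    zEl k t a (t + n) = ∑ l : Fin t → Fin 2 with ∑ s, (l s : ℕ) = n,
      ∏ s, cproj k t (C (a s) ^ (l s : ℕ) * X s ^ ((l s : ℕ) + 1)) := by
  simp only [zEl, add_right_inj, map_prod]

theorem zEl_self (a : Fin t → k) : zEl k t a t = cproj k t (∏ s, X s) := by
  have hzero : ({l | ∑ s, (l s : ℕ) = 0} : Finset (Fin t → Fin 2)) = {0} := by
    ext l
    simp only [mem_filter, mem_univ, true_and, mem_singleton, sum_eq_zero_iff,
      Fin.val_eq_zero_iff, true_implies, funext_iff, Pi.zero_apply]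
  have h := zEl_add a 0
  rw [add_zero] at h
  rw [h, hzero, sum_singleton, map_prod]
  simp

theorem yEl_mul_zEl (a : Fin t → k) (n : ℕ) :
    yEl k t a * zEl k t a (t + n) = ((n + 1 : ℕ) : k) • zEl k t a (t + (n + 1)) := by
  rw [yEl, map_sum, zEl_add, zEl_add, mul_sum, Nat.cast_smul_eq_nsmul,
    ← sum_sum_update_one_eq_smul]
  refine sum_congr rfl fun l _ =>
    sum_mul_prod_fin_two (c := fun s => cproj k t (C (a s) * X s))
      (f := fun s i => cproj k t (C (a s) ^ (i : ℕ) * X s ^ ((i : ℕ) + 1)))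
      (fun s => ?_) (fun s => ?_) l
  · simp only [Fin.val_zero, Fin.val_one, ← map_mul]
    ring_nf
  · simp only [Fin.val_one, ← map_mul]
    rw [show C (a s) * X s * (C (a s) ^ 1 * X s ^ 2) = X s ^ 3 * C (a s) ^ 2 by ring, map_mul,
      cproj_X_pow_three, zero_mul]

theorem yEl_pow_mul_prod_X (a : Fin t → k) (r : ℕ) :
    yEl k t a ^ r * cproj k t (∏ s, X s) = ((r.factorial : ℕ) : k) • zEl k t a (t + r) := by
  induction r with
  | zero => simp [zEl_self]
  | succ r ih =>
    rw [pow_succ', mul_assoc, ih, mul_smul_comm, yEl_mul_zEl, smul_smul, Nat.factorial_succ,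
      Nat.cast_mul, mul_comm]

end TruncatedCubes

theorem y_mul_z_general (k : Type) [Field k] (t : ℕ) (a : Fin t → k) :
    (∀ m : ℕ, t ≤ m → m ≤ 2 * t →
      yEl k t a * zEl k t a m = ((m + 1 - t : ℕ) : k) • zEl k t a (m + 1)) ∧
    (∀ r : ℕ, r ≤ t →
      yEl k t a ^ r * cproj k t (∏ s : Fin t, X s) =
        ((r.factorial : ℕ) : k) • zEl k t a (t + r)) := by
  refine ⟨fun m hm _ => ?_, fun r _ => yEl_pow_mul_prod_X a r⟩
  obtain ⟨n, rfl⟩ := Nat.exists_eq_add_of_le hm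
  rw [add_assoc, Nat.add_sub_cancel_left]
  exact yEl_mul_zEl a n

/-- In `R = k[x_1,…,x_t]/(x_1^3,…,x_t^3)`, with
`y = ∑ a_s x_s` and `z_m` as above, one has `y · z_m = (m+1-t) · z_{m+1}` for all
`t ≤ m ≤ 2t`; consequently `y^r · (x_1 ⋯ x_t) = r! · z_{t+r}` for `0 ≤ r ≤ t`. -/
theorem y_mul_z (k : Type) [Field k] (t : ℕ) (ht : 1 ≤ t) (a : Fin t → k) :
    (∀ m : ℕ, t ≤ m → m ≤ 2 * t →
      yEl k t a * zEl k t a m = ((m + 1 - t : ℕ) : k) • zEl k t a (m + 1)) ∧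
    (∀ r : ℕ, r ≤ t →
      yEl k t a ^ r * cproj k t (∏ s : Fin t, X s) =
        ((r.factorial : ℕ) : k) • zEl k t a (t + r)) :=
  y_mul_z_general k t a

end LocalFace
end
end

section
/- Let k be a field of characteristic p with 0 < p ≤ t, and let R = k[x_1,…,x_t]/(x_1^3,…,x_t^3). Then for every element y = Σ_{s=1}^t a_s x_s in the k-span of x_1,…,x_t, one has y^t·(x_1⋯x_t) = 0 in R, while x_1⋯x_t ≠ 0 and x_1^2⋯x_t^2 ≠ 0. Hence multiplication by y^t is not an isomorphism from the one-dimensional degree-t component spanned by x_1⋯x_t onto the one-dimensional degree-2t component spanned by x_1^2⋯x_t^2 (so the strong Lefschetz property fails for the local face module L_θ(Γ_t) in characteristic p ≤ t). -/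
open Finset MvPolynomial

set_option synthInstance.maxHeartbeats 1000000
set_option maxHeartbeats 4000000

noncomputable section

namespace LocalFace

/-! ## Face rings and local face modules -/

variable (K : Type) [Field K] {n d : ℕ}

/-! In characteristic `p`, Frobenius turns `y^p` into `∑ a_s^p x_s^p`, and `x_s^p · x_s` is
divisible by `x_s^3` because `p ≥ 2`; so `y^p`, and with it `y^t`, kills `x_1 ⋯ x_t`.
The monomials `x_1 ⋯ x_t` and `x_1^2 ⋯ x_t^2` survive in `R`, since an ideal generated by
monomials contains a monomial only if one of the generators divides it. -/

section PowerIdeal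

variable {σ R : Type*} [CommRing R]

lemma span_X_pow_eq_span_monomial_image (m : ℕ) :
    Ideal.span {q : MvPolynomial σ R | ∃ s, q = X s ^ m} =
      Ideal.span ((fun e => monomial e (1 : R)) '' Set.range fun s => Finsupp.single s m) := by
  congr 1
  ext q
  simp [X_pow_eq_monomial, eq_comm]

lemma monomial_one_mem_span_X_pow_iff [Nontrivial R] (m : ℕ) (e : σ →₀ ℕ) :
    monomial e (1 : R) ∈ Ideal.span {q : MvPolynomial σ R | ∃ s, q = X s ^ m} ↔
      ∃ s, m ≤ e s := by
  classical
  rw [span_X_pow_eq_span_monomial_image, mem_ideal_span_monomial_image,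
    support_monomial, if_neg one_ne_zero]
  simp [Finsupp.single_le_iff]

lemma sum_C_mul_X_pow_char_mul_prod_X_mem_span_X_pow [Fintype σ] (p : ℕ) [Fact p.Prime]
    [CharP R p] {m : ℕ} (hm : m ≤ p + 1) (c : σ → R) :
    (∑ s, C (c s) * X s) ^ p * ∏ s, X s ∈
      Ideal.span {q : MvPolynomial σ R | ∃ s, q = X s ^ m} := by
  rw [sum_pow_char, Finset.sum_mul]
  refine Ideal.sum_mem _ fun s _ => Ideal.mem_of_dvd _ ?_ (Ideal.subset_span ⟨s, rfl⟩)
  calc X s ^ m ∣ X s ^ p * X s := pow_succ (X s : MvPolynomial σ R) p ▸ pow_dvd_pow _ hm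
    _ ∣ X s ^ p * ∏ r, X r := mul_dvd_mul_left _ (Finset.dvd_prod_of_mem _ (Finset.mem_univ s))
    _ ∣ (C (c s) * X s) ^ p * ∏ r, X r := by rw [mul_pow, mul_assoc]; exact dvd_mul_left _ _

end PowerIdeal

lemma prod_X_pow_eq_monomial {σ R : Type*} [Fintype σ] [CommSemiring R] (n : ℕ) :
    (∏ s, X s ^ n : MvPolynomial σ R) =
      monomial (Finsupp.equivFunOnFinite.symm fun _ => n) 1 := by
  rw [monomial_eq, C_1, one_mul, Finsupp.prod_fintype _ _ fun _ => pow_zero _]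
  rfl

variable {k : Type} [Field k] {t : ℕ}

lemma cproj_prod_X_pow_ne_zero {n : ℕ} (hn : n ≤ 2) :
    cproj k t (∏ s, X s ^ n) ≠ 0 := by
  rw [cproj, Ne, Ideal.Quotient.eq_zero_iff_mem, prod_X_pow_eq_monomial,
    monomial_one_mem_span_X_pow_iff]
  simp only [Finsupp.coe_equivFunOnFinite_symm, not_exists, not_le]
  omega

lemma yEl_pow_mul_cproj_prod_X_eq_zero (p : ℕ) [Fact p.Prime] [CharP k p] (hpt : p ≤ t)
    (a : Fin t → k) : yEl k t a ^ t * cproj k t (∏ s, X s) = 0 := by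
  refine pow_mul_eq_zero_of_le hpt ?_
  rw [yEl, ← map_pow, ← map_mul, cproj, Ideal.Quotient.eq_zero_iff_mem]
  have hp := (Fact.out : p.Prime).two_le
  exact sum_C_mul_X_pow_char_mul_prod_X_mem_span_X_pow p (by omega) a

/-- Let `k` be a field of characteristic `p` with `0 < p ≤ t`, and
`R = k[x_1,…,x_t]/(x_1^3,…,x_t^3)`.  For every `y = ∑ a_s x_s` one has
`y^t · (x_1 ⋯ x_t) = 0`, while `x_1 ⋯ x_t ≠ 0` and `x_1^2 ⋯ x_t^2 ≠ 0`; hence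
multiplication by `y^t` does not map the line spanned by `x_1 ⋯ x_t` onto the line
spanned by `x_1^2 ⋯ x_t^2` (failure of strong Lefschetz in characteristic
`p ≤ t`). -/
theorem strong_lefschetz_fails_char_p (k : Type) [Field k] (p t : ℕ)
    (hchar : CharP k p) (hp : 0 < p) (hpt : p ≤ t) (a : Fin t → k) :
    yEl k t a ^ t * cproj k t (∏ s : Fin t, X s) = 0 ∧
    cproj k t (∏ s : Fin t, X s) ≠ 0 ∧
    cproj k t (∏ s : Fin t, X s ^ 2) ≠ 0 ∧
    (∀ u ∈ Submodule.span k {cproj k t (∏ s : Fin t, X s)},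
      yEl k t a ^ t * u ≠ cproj k t (∏ s : Fin t, X s ^ 2)) := by
  have : NeZero p := ⟨hp.ne'⟩
  have := CharP.char_is_prime_of_pos k p
  have hzero := yEl_pow_mul_cproj_prod_X_eq_zero p hpt a
  have hx1 : cproj k t (∏ s : Fin t, X s) ≠ 0 := by
    simpa using cproj_prod_X_pow_ne_zero (k := k) (t := t) (n := 1) one_le_two
  have hx2 : cproj k t (∏ s : Fin t, X s ^ 2) ≠ 0 := cproj_prod_X_pow_ne_zero le_rfl
  refine ⟨hzero, hx1, hx2, fun u hu hyu => hx2 ?_⟩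
  obtain ⟨c, rfl⟩ := Submodule.mem_span_singleton.1 hu
  rw [← hyu, mul_smul_comm, hzero, smul_zero]

end LocalFace
end
end

section
/- Let k be a field of characteristic p > 0, let t ≥ 2p−1, and let R = k[x_1,…,x_t]/(x_1^3,…,x_t^3). Fix a_1,…,a_t ∈ k, all nonzero, set y = Σ_s a_s x_s and m = t + p − 1, and let z_m = Σ (Π_s a_s^{l_s−1}) x_1^{l_1}⋯x_t^{l_t}, the sum over all (l_1,…,l_t) with l_s ∈ {1,2} and Σ_s l_s = m. Then z_m ≠ 0 and y·z_m = 0 in R. Since t ≤ m < ⌈3t/2⌉, multiplication by y fails to be injective on a graded piece of the span of {x_1^{l_1}⋯x_t^{l_t} : l_s ∈ {1,2}} strictly below the middle degree 3t/2, so the weak Lefschetz property fails for the local face module L_θ(Γ_t) when 2p − 1 ≤ t. -/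
open Finset MvPolynomial

set_option synthInstance.maxHeartbeats 1000000
set_option maxHeartbeats 4000000

noncomputable section

namespace LocalFace

/-! ## Face rings and local face modules -/

variable (K : Type) [Field K] {n d : ℕ}

/-!
Index the summands of `z_{t+c}` by `l ∈ {0,1}^t`, the summand being
`T_l = ∏ a_s^{l_s} x_s^{l_s+1}`. In `R`, `a_s x_s T_l` is `T_{l + e_s}` when `l_s = 0` and vanishes
when `l_s = 1`, because it is then divisible by `x_s^3`. Summing, every `T_{l'}` with `|l'| = c + 1`
is hit once for each of its `c + 1` coordinates equal to `1`, so `y z_{t+c} = (c + 1) z_{t+c+1}`,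
which vanishes for `c = p - 1`. On the other hand `z_{t+c} ≠ 0` for `c ≤ t`: its summands are
distinct monomials with all exponents at most `2` and nonzero coefficients, and the cube ideal is
a monomial ideal containing no such monomial.
-/

section WeightSlices

variable {ι : Type*} [Fintype ι]

theorem sum_val_eq_card_filter_eq_one (l : ι → Fin 2) :
    ∑ s, (l s : ℕ) = #(univ.filter fun s => l s = 1) := by
  rw [card_filter]
  exact sum_congr rfl fun s _ => by generalize l s = j; fin_cases j <;> rfl

variable [DecidableEq ι]

def weightSlice (ι : Type*) [Fintype ι] [DecidableEq ι] (c : ℕ) : Finset (ι → Fin 2) :=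
  univ.filter fun l => ∑ s, (l s : ℕ) = c

theorem mem_weightSlice {c : ℕ} {l : ι → Fin 2} : l ∈ weightSlice ι c ↔ ∑ s, (l s : ℕ) = c := by
  simp [weightSlice]

theorem sum_val_update (l : ι → Fin 2) (s : ι) (v : Fin 2) :
    ∑ s', (Function.update l s v s' : ℕ) = v + ∑ s' ∈ univ \ {s}, (l s' : ℕ) := by
  simp_rw [Function.apply_update (fun _ (j : Fin 2) => (j : ℕ))]
  exact sum_update_of_mem (mem_univ s) _ _

theorem sum_val_eq_add_sum_diff (l : ι → Fin 2) (s : ι) :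
    ∑ s', (l s' : ℕ) = l s + ∑ s' ∈ univ \ {s}, (l s' : ℕ) := by
  rw [← sum_val_update, Function.update_eq_self]

theorem weightSlice_nonempty {c : ℕ} (hc : c ≤ Fintype.card ι) : (weightSlice ι c).Nonempty := by
  obtain ⟨A, -, hA⟩ := exists_subset_card_eq (s := (univ : Finset ι)) hc
  refine ⟨fun s => if s ∈ A then 1 else 0, mem_weightSlice.2 ?_⟩
  rw [sum_val_eq_card_filter_eq_one, ← hA]
  congr 1
  ext s
  by_cases hs : s ∈ A <;> simp [hs]

theorem update_mem_weightSlice {c c' : ℕ} {l : ι → Fin 2} {s : ι} {v : Fin 2}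
    (hl : l ∈ weightSlice ι c) (hc : c + v = c' + l s) :
    Function.update l s v ∈ weightSlice ι c' := by
  rw [mem_weightSlice] at hl ⊢
  have := sum_val_eq_add_sum_diff l s
  rw [sum_val_update]
  omega

theorem sum_weightSlice_filter_update {M : Type*} [AddCommMonoid M] (f : (ι → Fin 2) → M)
    (c : ℕ) (s : ι) :
    ∑ l ∈ (weightSlice ι c).filter (fun l => l s = 0), f (Function.update l s 1) =
      ∑ l ∈ (weightSlice ι (c + 1)).filter (fun l => l s = 1), f l := by
  refine sum_nbij' (Function.update · s 1) (Function.update · s 0) (fun l hl => ?_)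
    (fun l hl => ?_) (fun l hl => ?_) (fun l hl => ?_) fun _ _ => rfl
  all_goals obtain ⟨hl, hls⟩ := mem_filter.1 hl
  · exact mem_filter.2 ⟨update_mem_weightSlice hl (by simp [hls]), Function.update_self ..⟩
  · exact mem_filter.2 ⟨update_mem_weightSlice hl (by simp [hls]), Function.update_self ..⟩
  · rw [Function.update_idem, Function.update_eq_self_iff, hls]
  · rw [Function.update_idem, Function.update_eq_self_iff, hls]

/-- Double counting: `(l, s) ↦ (update l s 1, s)` is a bijection onto the pairs `(l', s)` with
`l' ∈ weightSlice (c + 1)` and `l' s = 1`, and every `l'` has exactly `c + 1` such `s`. -/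
theorem sum_weightSlice_sum_update {M : Type*} [AddCommMonoid M] (f : (ι → Fin 2) → M)
    (c : ℕ) :
    ∑ l ∈ weightSlice ι c, ∑ s ∈ univ.filter (fun s => l s = 0), f (Function.update l s 1) =
      (c + 1) • ∑ l ∈ weightSlice ι (c + 1), f l := by
  calc ∑ l ∈ weightSlice ι c, ∑ s ∈ univ.filter (fun s => l s = 0), f (Function.update l s 1)
      = ∑ s : ι, ∑ l ∈ (weightSlice ι c).filter (fun l => l s = 0),
          f (Function.update l s 1) := by
        simp_rw [sum_filter]; exact sum_comm
    _ = ∑ s : ι, ∑ l ∈ (weightSlice ι (c + 1)).filter (fun l => l s = 1), f l :=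
        sum_congr rfl fun s _ => sum_weightSlice_filter_update f c s
    _ = ∑ l ∈ weightSlice ι (c + 1), #(univ.filter fun s => l s = 1) • f l := by
        simp_rw [card_eq_sum_ones, sum_smul, one_smul, sum_filter]; exact sum_comm
    _ = (c + 1) • ∑ l ∈ weightSlice ι (c + 1), f l := by
        rw [smul_sum]
        refine sum_congr rfl fun l hl => ?_
        rw [← sum_val_eq_card_filter_eq_one, mem_weightSlice.1 hl]

end WeightSlices

section CubeTerm

variable {R ι : Type*} [Fintype ι]

def cubeTerm [CommSemiring R] (a : ι → R) (l : ι → Fin 2) : MvPolynomial ι R :=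
  ∏ s, (C (a s) ^ (l s : ℕ) * X s ^ ((l s : ℕ) + 1))

def cubeExponent (l : ι → Fin 2) : ι →₀ ℕ :=
  Finsupp.equivFunOnFinite.symm fun s => (l s : ℕ) + 1

theorem cubeExponent_apply (l : ι → Fin 2) (s : ι) : cubeExponent l s = (l s : ℕ) + 1 := rfl

theorem cubeExponent_injective : Function.Injective (cubeExponent (ι := ι)) := fun l l' h =>
  funext fun s => Fin.val_injective <| by
    simpa only [cubeExponent_apply, Nat.add_right_cancel_iff] using DFunLike.congr_fun h s

variable [CommSemiring R]

theorem cubeTerm_eq_monomial (a : ι → R) (l : ι → Fin 2) :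
    cubeTerm a l = monomial (cubeExponent l) (∏ s, a s ^ (l s : ℕ)) := by
  rw [monomial_eq, Finsupp.prod_fintype _ _ fun _ => pow_zero _, cubeTerm, prod_mul_distrib,
    map_prod]
  simp_rw [C_pow, cubeExponent_apply]

variable [DecidableEq ι]

theorem coeff_cubeExponent_sum_cubeTerm (a : ι → R) {S : Finset (ι → Fin 2)} {l : ι → Fin 2}
    (hl : l ∈ S) :
    coeff (cubeExponent l) (∑ l' ∈ S, cubeTerm a l') = ∏ s, a s ^ (l s : ℕ) := by
  simp_rw [cubeTerm_eq_monomial, coeff_sum, coeff_monomial]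
  rw [sum_eq_single_of_mem l hl fun l' _ hne => if_neg (cubeExponent_injective.ne hne), if_pos rfl]

theorem cubeTerm_update (a : ι → R) (l : ι → Fin 2) (s : ι) (v : Fin 2) :
    cubeTerm a (Function.update l s v) = C (a s) ^ (v : ℕ) * X s ^ ((v : ℕ) + 1) *
      ∏ s' ∈ univ \ {s}, (C (a s') ^ (l s' : ℕ) * X s' ^ ((l s' : ℕ) + 1)) := by
  rw [cubeTerm]
  simp_rw [Function.apply_update (fun s' (j : Fin 2) => C (a s') ^ (j : ℕ) * X s' ^ ((j : ℕ) + 1))]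
  exact prod_update_of_mem (mem_univ s) _ _

theorem C_mul_X_mul_cubeTerm_of_eq_zero (a : ι → R) {l : ι → Fin 2} {s : ι} (h : l s = 0) :
    C (a s) * X s * cubeTerm a l = cubeTerm a (Function.update l s 1) := by
  rw [cubeTerm_update a l s 1]
  conv_lhs => rw [← Function.update_eq_self s l, cubeTerm_update]
  rw [h, Fin.val_zero, Fin.val_one]
  ring

theorem X_pow_three_dvd_X_mul_cubeTerm (a : ι → R) {l : ι → Fin 2} {s : ι} (h : l s = 1) :
    X s ^ 3 ∣ X s * cubeTerm a l := by
  conv_rhs => rw [← Function.update_eq_self s l, cubeTerm_update]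
  rw [h]
  exact ⟨C (a s) * ∏ s' ∈ univ \ {s}, (C (a s') ^ (l s' : ℕ) * X s' ^ ((l s' : ℕ) + 1)),
    by simp only [Fin.val_one]; ring⟩

end CubeTerm

section CubeIdeal

variable (R ι : Type*) [CommSemiring R]

def cubeIdeal : Ideal (MvPolynomial ι R) :=
  Ideal.span {p | ∃ s, p = X s ^ 3}

variable {R ι}

theorem mem_cubeIdeal_iff {f : MvPolynomial ι R} :
    f ∈ cubeIdeal R ι ↔ ∀ e ∈ f.support, ∃ s, 3 ≤ e s := by
  have hgen : {p : MvPolynomial ι R | ∃ s, p = X s ^ 3} =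
      (fun e => monomial e 1) '' Set.range fun s => Finsupp.single s 3 := by
    ext p
    simp [X_pow_eq_monomial, eq_comm]
  simp_rw [cubeIdeal, hgen, mem_ideal_span_monomial_image, Set.exists_range_iff,
    Finsupp.single_le_iff]

theorem sum_cubeTerm_notMem_cubeIdeal [NoZeroDivisors R] [Nontrivial R] [Fintype ι]
    [DecidableEq ι] {a : ι → R} (ha : ∀ s, a s ≠ 0) {S : Finset (ι → Fin 2)} (hS : S.Nonempty) :
    ∑ l ∈ S, cubeTerm a l ∉ cubeIdeal R ι := by
  obtain ⟨l, hl⟩ := hS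
  rw [mem_cubeIdeal_iff]
  intro h
  obtain ⟨s, hs⟩ := h (cubeExponent l) <| by
    rw [mem_support_iff, coeff_cubeExponent_sum_cubeTerm a hl]
    exact prod_ne_zero_iff.2 fun s _ => pow_ne_zero _ (ha s)
  have := (l s).isLt
  rw [cubeExponent_apply] at hs
  omega

end CubeIdeal

section CubeQuot

variable {k : Type} [Field k] {t : ℕ}

theorem cproj_eq_zero_iff {f : MvPolynomial (Fin t) k} :
    cproj k t f = 0 ↔ f ∈ cubeIdeal k (Fin t) :=
  Ideal.Quotient.eq_zero_iff_mem

theorem zEl_add_s16 (a : Fin t → k) (c : ℕ) :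
    zEl k t a (t + c) = ∑ l ∈ weightSlice (Fin t) c, cproj k t (cubeTerm a l) := by
  rw [zEl, weightSlice]
  exact sum_congr (filter_congr fun l _ => by omega) fun _ _ => rfl

theorem zEl_add_ne_zero {a : Fin t → k} (ha : ∀ s, a s ≠ 0) {c : ℕ} (hc : c ≤ t) :
    zEl k t a (t + c) ≠ 0 := by
  rw [zEl_add_s16, ← map_sum, Ne, cproj_eq_zero_iff]
  exact sum_cubeTerm_notMem_cubeIdeal ha (weightSlice_nonempty (by simpa using hc))

theorem cproj_C_mul_X_mul_cubeTerm (a : Fin t → k) (l : Fin t → Fin 2) (s : Fin t) :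
    cproj k t (C (a s) * X s * cubeTerm a l) =
      if l s = 0 then cproj k t (cubeTerm a (Function.update l s 1)) else 0 := by
  split_ifs with h
  · rw [C_mul_X_mul_cubeTerm_of_eq_zero a h]
  · rw [cproj_eq_zero_iff, mul_assoc]
    refine Ideal.mul_mem_left _ _ (Ideal.mem_of_dvd _ (X_pow_three_dvd_X_mul_cubeTerm a ?_)
      (Ideal.subset_span ⟨s, rfl⟩))
    exact Fin.eq_one_of_ne_zero _ h

theorem yEl_mul_cproj_cubeTerm (a : Fin t → k) (l : Fin t → Fin 2) :
    yEl k t a * cproj k t (cubeTerm a l) =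
      ∑ s ∈ univ.filter (fun s => l s = 0), cproj k t (cubeTerm a (Function.update l s 1)) := by
  rw [yEl, ← map_mul, sum_mul, map_sum, sum_filter]
  exact sum_congr rfl fun s _ => cproj_C_mul_X_mul_cubeTerm a l s

theorem yEl_mul_zEl_add (a : Fin t → k) (c : ℕ) :
    yEl k t a * zEl k t a (t + c) = (c + 1) • zEl k t a (t + (c + 1)) := by
  simp_rw [zEl_add_s16, mul_sum, yEl_mul_cproj_cubeTerm]
  exact sum_weightSlice_sum_update (fun l => cproj k t (cubeTerm a l)) c

end CubeQuot

/-- Let `k` be a field of characteristic `p > 0`, let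
`t ≥ 2p - 1`, and `R = k[x_1,…,x_t]/(x_1^3,…,x_t^3)`.  If all `a_s` are nonzero,
`y = ∑ a_s x_s` and `m = t + p - 1`, then `z_m ≠ 0` and `y · z_m = 0`; moreover
`t ≤ m < ⌈3t/2⌉`, so multiplication by `y` fails to be injective strictly below the
middle degree (failure of weak Lefschetz). -/
theorem weak_lefschetz_fails_char_p (k : Type) [Field k] (p t : ℕ)
    (hchar : CharP k p) (hp : 0 < p) (hpt : 2 * p - 1 ≤ t) (a : Fin t → k)
    (ha : ∀ s : Fin t, a s ≠ 0) :
    zEl k t a (t + p - 1) ≠ 0 ∧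
    yEl k t a * zEl k t a (t + p - 1) = 0 ∧
    t ≤ t + p - 1 ∧ 2 * (t + p - 1) < 3 * t := by
  have hm : t + p - 1 = t + (p - 1) := by omega
  refine ⟨hm ▸ zEl_add_ne_zero ha (by omega), ?_, by omega, by omega⟩
  rw [hm, yEl_mul_zEl_add, Nat.sub_add_cancel hp, ← Nat.cast_smul_eq_nsmul k,
    CharP.cast_eq_zero, zero_smul]

end LocalFace
end
end

section
/- Let σ : Γ → 2^V be a vertex-induced, semi-small topological triangulation of a (d−1)-dimensional simplex (semi-small meaning 2·e(F) ≤ |σ(F)| for every face F, where e(F) = |σ(F)| − |F|), and let F be an interior face of Γ with |F| = d/2. Then |σ(G)| = 2·|G| for every subset G ⊆ F. -/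
open Finset MvPolynomial

set_option synthInstance.maxHeartbeats 1000000
set_option maxHeartbeats 4000000

noncomputable section

namespace LocalFace

/-! ## Face rings and local face modules -/

variable (K : Type) [Field K] {n d : ℕ}

/-! Vertex-inducedness splits `σ(F)` as `σ(G) ∪ σ(F ∖ G)`, so `d ≤ |σ(G)| + |σ(F ∖ G)|`.
Semi-smallness says `|σ(H)| ≤ 2|H|` for every face `H`, and `2|G| + 2|F ∖ G| = 2|F| = d`,
so both bounds are attained. -/

namespace TopTriangulation

variable {n d : ℕ} {T : TopTriangulation n d}

theorem VertexInduced.sigma_eq_biUnion (hvi : T.VertexInduced) {G : Finset (Fin n)}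
    (hG : G ∈ T.faces) : T.σ G = G.biUnion fun j => T.σ {j} := by
  have hsub : (G.biUnion fun j => T.σ {j}) ⊆ T.σ G :=
    biUnion_subset.2 fun j hj => T.mono (T.vertex_mem j) hG (singleton_subset_iff.2 hj)
  by_contra hne
  exact hvi ⟨G, hG, _, Finset.ssubset_iff_subset_ne.2 ⟨hsub, Ne.symm hne⟩,
    fun j hj => subset_biUnion_of_mem (fun j => T.σ {j}) hj⟩

theorem VertexInduced.sigma_union (hvi : T.VertexInduced) {G H : Finset (Fin n)}
    (hGH : G ∪ H ∈ T.faces) : T.σ (G ∪ H) = T.σ G ∪ T.σ H := by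
  rw [hvi.sigma_eq_biUnion hGH, hvi.sigma_eq_biUnion (T.down_closed _ hGH G subset_union_left),
    hvi.sigma_eq_biUnion (T.down_closed _ hGH H subset_union_right), union_biUnion]

theorem card_sigma_le_two_mul
    (hss : ∀ F ∈ T.faces, 2 * ((T.σ F).card - F.card) ≤ (T.σ F).card)
    {G : Finset (Fin n)} (hG : G ∈ T.faces) : (T.σ G).card ≤ 2 * G.card := by
  have := hss G hG
  omega

end TopTriangulation

/-- Let `σ : Γ → 2^V` be a vertex-induced semi-small
triangulation of a `(d-1)`-dimensional simplex, and let `F` be an interior face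
with `|F| = d/2`.  Then `|σ(G)| = 2|G|` for every subset `G ⊆ F`. -/
theorem sigma_card_of_semismall_interior {n d : ℕ} (T : TopTriangulation n d)
    (hvi : T.VertexInduced)
    (hss : ∀ F ∈ T.faces, 2 * ((T.σ F).card - F.card) ≤ (T.σ F).card)
    (F : Finset (Fin n)) (hF : T.InteriorFace F) (hcard : 2 * F.card = d) :
    ∀ G ⊆ F, (T.σ G).card = 2 * G.card := by
  intro G hG
  have hGface : G ∈ T.faces := T.down_closed F hF.1 G hG
  have hrest : F \ G ∈ T.faces := T.down_closed F hF.1 _ sdiff_subset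
  have hcover : d ≤ (T.σ G).card + (T.σ (F \ G)).card :=
    calc d = (T.σ F).card := by rw [hF.2, card_univ, Fintype.card_fin]
      _ = (T.σ G ∪ T.σ (F \ G)).card := by
        rw [← hvi.sigma_union ((union_sdiff_of_subset hG).symm ▸ hF.1), union_sdiff_of_subset hG]
      _ ≤ (T.σ G).card + (T.σ (F \ G)).card := card_union_le _ _
  have hGbound := TopTriangulation.card_sigma_le_two_mul hss hGface
  have hrestBound := TopTriangulation.card_sigma_le_two_mul hss hrest
  have hsplit := card_sdiff_add_card_eq_card hG
  omega

end LocalFace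
end
end
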